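/- Let ζ ∈ (-4,0) and let K : ℝ × ℝ³ → ℝ satisfy |K(t,x)| ≤ C(|t|^{1/2} + |x|)^{ζ} for all (t,x). Let ρ : ℝ³ → ℝ be a smooth function supported in the unit ball with ∫ρ = 1, and for ε > 0 set ρ_ε(y) = ε^{-3} ρ(y/ε). Then for every δ with 0 < δ < 1 and ζ + δ > -3, there exists a constant C' (independent of ε) such that |(K(t,·) * ρ_ε)(x)| ≤ C' |t|^{-δ/2} (|t|^{1/2} + |x|)^{ζ+δ} for all t > 0, x ∈ ℝ³, uniformly in ε ∈ (0,1]. -/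

import Mathlib

set_option maxHeartbeats 1000000

open MeasureTheory Metric Set

local notation "E3" => EuclideanSpace ℝ (Fin 3)

lemma polar_bound (p s R : ℝ) (hp3 : -3 < p) (hs : 0 < s) (hR : 0 < R)
    (hsR : s ≤ R) :
    ∫ u in Metric.closedBall (0 : E3) R, (s + ‖u‖) ^ p ≤
      3 * (volume (Metric.ball (0 : E3) 1)).toReal * ((2 * R) ^ (3 + p) / (3 + p)) := by
  have hκ : (0:ℝ) ≤ (volume (Metric.ball (0 : E3) 1)).toReal := ENNReal.toReal_nonneg
  set f₀ : ℝ → ℝ := Set.indicator (Iic R) (fun r => (s + r) ^ p) with hf₀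
  have hA : ∫ u in Metric.closedBall (0 : E3) R, (s + ‖u‖) ^ p
      = ∫ u : E3, f₀ ‖u‖ := by
    rw [← integral_indicator measurableSet_closedBall]
    congr 1
    funext u
    simp only [hf₀, Set.indicator, mem_closedBall_zero_iff, Set.mem_Iic]
  have hI : ∫ y in Ioi (0:ℝ), y ^ (3 - 1) • f₀ y ≤ (2 * R) ^ (3 + p) / (3 + p) := by
    have h1 : ∫ y in Ioi (0:ℝ), y ^ (3 - 1) • f₀ y
        = ∫ y in Ioc (0:ℝ) R, y ^ 2 * (s + y) ^ p := by
      rw [show ∫ y in Ioi (0:ℝ), y ^ (3-1) • f₀ y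
          = ∫ y in Ioi (0:ℝ), Set.indicator (Iic R) (fun y => y ^ 2 * (s + y) ^ p) y from ?_,
        setIntegral_indicator measurableSet_Iic, Set.Ioi_inter_Iic]
      congr 1
      funext y
      simp only [hf₀, Set.indicator, smul_eq_mul]
      split <;> simp
    have hint : IntegrableOn (fun y => (s + y) ^ (2 + p)) (Ioc (0:ℝ) R) := by
      refine (ContinuousOn.integrableOn_compact isCompact_Icc ?_).mono_set Ioc_subset_Icc_self
      refine (continuousOn_const.add continuousOn_id).rpow_const fun y hy => Or.inl ?_
      have := hy.1; have h' : (0:ℝ) < s + y := by linarith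
      exact h'.ne'
    have h2 : ∫ y in Ioc (0:ℝ) R, y ^ 2 * (s + y) ^ p
        ≤ ∫ y in Ioc (0:ℝ) R, (s + y) ^ (2 + p) := by
      refine integral_mono_of_nonneg ?_ hint ?_
      · refine (ae_restrict_iff' measurableSet_Ioc).2 (Filter.Eventually.of_forall fun y hy => ?_)
        have h0y : 0 < y := hy.1
        positivity
      · refine (ae_restrict_iff' measurableSet_Ioc).2 (Filter.Eventually.of_forall fun y hy => ?_)
        have h0y : 0 < y := hy.1
        have hsy : (0:ℝ) < s + y := by linarith
        show y ^ 2 * (s + y) ^ p ≤ (s + y) ^ (2 + p)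
        rw [Real.rpow_add hsy]
        have h2' : (s + y) ^ ((2:ℝ)) = (s + y) ^ (2:ℕ) := by
          rw [← Real.rpow_natCast (s + y) 2]; norm_num
        rw [h2']
        refine mul_le_mul_of_nonneg_right ?_ (Real.rpow_nonneg hsy.le p)
        exact pow_le_pow_left₀ h0y.le (by linarith) 2
    have h3 : ∫ y in Ioc (0:ℝ) R, (s + y) ^ (2 + p)
        = ((s + R) ^ (3 + p) - s ^ (3 + p)) / (3 + p) := by
      rw [← intervalIntegral.integral_of_le hR.le]
      have hc := intervalIntegral.integral_comp_add_left (a := 0) (b := R)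
        (fun u => u ^ (2 + p)) s
      rw [hc, integral_rpow (Or.inl (by linarith))]
      norm_num
      ring_nf
    have h4 : ((s + R) ^ (3 + p) - s ^ (3 + p)) / (3 + p) ≤ (2 * R) ^ (3 + p) / (3 + p) := by
      apply div_le_div_of_nonneg_right ?_ (by linarith)
      calc (s + R) ^ (3 + p) - s ^ (3 + p) ≤ (s + R) ^ (3 + p) :=
            sub_le_self _ (Real.rpow_nonneg hs.le _)
        _ ≤ (2 * R) ^ (3 + p) := Real.rpow_le_rpow (by positivity) (by linarith) (by linarith)
    calc ∫ y in Ioi (0:ℝ), y ^ (3 - 1) • f₀ y = _ := h1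
      _ ≤ _ := h2
      _ = _ := h3
      _ ≤ _ := h4
  rw [hA, integral_fun_norm_addHaar volume f₀, finrank_euclideanSpace_fin,
    nsmul_eq_mul, smul_eq_mul, ← mul_assoc]
  push_cast
  exact mul_le_mul_of_nonneg_left hI (by positivity)

lemma conv_bound (ε : ℝ) (hε0 : 0 < ε) (K1 ρ1 : E3 → ℝ) (M c₀ : ℝ)
    (hM : ∀ y, |ρ1 y| ≤ M) (hsupp : ∀ y : E3, ε < ‖y‖ → ρ1 y = 0) (hc₀ : 0 ≤ c₀)
    (hKb : ∀ y ∈ Metric.closedBall (0:E3) ε, |K1 y| ≤ c₀) :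
    |∫ y : E3, K1 y * (ε ^ (-3:ℝ) * ρ1 y)|
      ≤ c₀ * M * (volume (Metric.ball (0:E3) 1)).toReal := by
  have hM0 : 0 ≤ M := (abs_nonneg (ρ1 0)).trans (hM 0)
  have hεp : (0:ℝ) ≤ ε ^ (-3:ℝ) := Real.rpow_nonneg hε0.le _
  set κ := (volume (Metric.ball (0:E3) 1)).toReal with hκdef
  have hκ : 0 ≤ κ := ENNReal.toReal_nonneg
  have step1 : |∫ y : E3, K1 y * (ε ^ (-3:ℝ) * ρ1 y)|
      ≤ ∫ y : E3, |K1 y * (ε ^ (-3:ℝ) * ρ1 y)| := by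
    have h := norm_integral_le_integral_norm (μ := volume)
      (fun y : E3 => K1 y * (ε ^ (-3:ℝ) * ρ1 y))
    simpa only [Real.norm_eq_abs] using h
  set g : E3 → ℝ := Set.indicator (Metric.closedBall (0:E3) ε) (fun _ => c₀ * (ε ^ (-3:ℝ) * M))
    with hgdef
  have step2 : ∫ y : E3, |K1 y * (ε ^ (-3:ℝ) * ρ1 y)| ≤ ∫ y : E3, g y := by
    refine integral_mono_of_nonneg (Filter.Eventually.of_forall fun y => abs_nonneg _) ?_
      (Filter.Eventually.of_forall fun y => ?_)
    · exact (integrableOn_const measure_closedBall_lt_top.ne).integrable_indicator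
        measurableSet_closedBall
    · by_cases hy : y ∈ Metric.closedBall (0:E3) ε
      · rw [hgdef, Set.indicator_of_mem hy]
        show |K1 y * (ε ^ (-3:ℝ) * ρ1 y)| ≤ c₀ * (ε ^ (-3:ℝ) * M)
        rw [abs_mul, abs_mul, abs_of_nonneg hεp]
        exact mul_le_mul (hKb y hy) (mul_le_mul_of_nonneg_left (hM y) hεp)
          (by positivity) hc₀
      · rw [hgdef, Set.indicator_of_notMem hy]
        show |K1 y * (ε ^ (-3:ℝ) * ρ1 y)| ≤ 0
        rw [mem_closedBall_zero_iff, not_le] at hy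
        simp [hsupp y hy]
  have step3 : ∫ y : E3, g y = ε ^ (3:ℕ) * κ * (c₀ * (ε ^ (-3:ℝ) * M)) := by
    rw [hgdef, integral_indicator_const _ measurableSet_closedBall, smul_eq_mul, measureReal_def,
      Measure.addHaar_closedBall volume (0:E3) hε0.le, finrank_euclideanSpace_fin,
      ENNReal.toReal_mul, ENNReal.toReal_ofReal (by positivity)]
  have hpow : (ε:ℝ) ^ (3:ℕ) * ε ^ (-3:ℝ) = 1 := by
    rw [← Real.rpow_natCast ε 3, ← Real.rpow_add hε0]
    norm_num
  calc |∫ y : E3, K1 y * (ε ^ (-3:ℝ) * ρ1 y)| ≤ ∫ y : E3, g y := step1.trans step2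
    _ = ε ^ (3:ℕ) * κ * (c₀ * (ε ^ (-3:ℝ) * M)) := step3
    _ = c₀ * M * κ := by linear_combination (κ * c₀ * M) * hpow

theorem stmt0 (ζ : ℝ) (hζ : ζ ∈ Set.Ioo (-4 : ℝ) 0)
    (K : ℝ × EuclideanSpace ℝ (Fin 3) → ℝ) (C : ℝ)
    (hK : ∀ (t : ℝ) (x : EuclideanSpace ℝ (Fin 3)),
      |K (t, x)| ≤ C * (|t| ^ ((1 : ℝ) / 2) + ‖x‖) ^ ζ)
    (ρ : EuclideanSpace ℝ (Fin 3) → ℝ)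
    (hρ : ContDiff ℝ (⊤ : ℕ∞) ρ)
    (hρsupp : ∀ y : EuclideanSpace ℝ (Fin 3), 1 < ‖y‖ → ρ y = 0)
    (hρint : (∫ y : EuclideanSpace ℝ (Fin 3), ρ y) = 1)
    (δ : ℝ) (hδ0 : 0 < δ) (hδ1 : δ < 1) (hζδ : -3 < ζ + δ) :
    ∃ C' : ℝ, ∀ ε ∈ Set.Ioc (0 : ℝ) 1, ∀ t : ℝ, 0 < t →
      ∀ x : EuclideanSpace ℝ (Fin 3),
      |∫ y : EuclideanSpace ℝ (Fin 3), K (t, x - y) * (ε ^ (-3 : ℝ) * ρ (ε⁻¹ • y))|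
        ≤ C' * |t| ^ (-δ / 2) * (|t| ^ ((1 : ℝ) / 2) + ‖x‖) ^ (ζ + δ) := by
  obtain ⟨hζ4, hζ0⟩ := hζ
  have hC : 0 ≤ C := by
    have h := hK 1 0
    simp only [abs_one, Real.one_rpow, norm_zero, add_zero, mul_one] at h
    exact (abs_nonneg _).trans h
  -- bound for ρ
  have hρc : Continuous ρ := hρ.continuous
  have hρcs : HasCompactSupport ρ := HasCompactSupport.intro
    (isCompact_closedBall (0:E3) 1) (fun y hy => hρsupp y (by
      rwa [mem_closedBall_zero_iff, not_le] at hy))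
  obtain ⟨M, hM⟩ := hρcs.exists_bound_of_continuous hρc
  simp only [Real.norm_eq_abs] at hM
  have hM0 : 0 ≤ M := (abs_nonneg (ρ 0)).trans (hM 0)
  set p := ζ + δ with hpdef
  obtain ⟨κ, hκdef⟩ : ∃ k : ℝ, k = (volume (Metric.ball (0:E3) 1)).toReal := ⟨_, rfl⟩
  have hκ0 : 0 ≤ κ := hκdef ▸ ENNReal.toReal_nonneg
  have h3p : (0:ℝ) < 3 + p := by linarith
  obtain ⟨D, hDdef⟩ : ∃ d : ℝ, d = κ * (1 + (2:ℝ) ^ (-ζ) + (3:ℝ) ^ (-p))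
      + 3 * κ * ((6:ℝ) ^ (3 + p) / (3 + p)) * (3:ℝ) ^ (-p) := ⟨_, rfl⟩
  have hD2 : (0:ℝ) ≤ (2:ℝ) ^ (-ζ) := Real.rpow_nonneg (by norm_num) _
  have hD3 : (0:ℝ) ≤ (3:ℝ) ^ (-p) := Real.rpow_nonneg (by norm_num) _
  have hD6 : (0:ℝ) ≤ (6:ℝ) ^ (3 + p) := Real.rpow_nonneg (by norm_num) _
  have hDc0 : (0:ℝ) ≤ 3 * κ * ((6:ℝ) ^ (3 + p) / (3 + p)) * (3:ℝ) ^ (-p) := by positivity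
  have hD1 : κ * 1 ≤ D := by
    rw [hDdef]; nlinarith [mul_nonneg hκ0 hD2, mul_nonneg hκ0 hD3, hDc0]
  have hDa : κ * (2:ℝ) ^ (-ζ) ≤ D := by
    rw [hDdef]; nlinarith [mul_nonneg hκ0 hD3, hκ0, hDc0]
  have hDb : κ * (3:ℝ) ^ (-p) ≤ D := by
    rw [hDdef]; nlinarith [mul_nonneg hκ0 hD2, hκ0, hDc0]
  have hDcle : 3 * κ * ((6:ℝ) ^ (3 + p) / (3 + p)) * (3:ℝ) ^ (-p) ≤ D := by
    rw [hDdef]; nlinarith [mul_nonneg hκ0 hD2, mul_nonneg hκ0 hD3, hκ0]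
  refine ⟨C * M * D, ?_⟩
  rintro ε ⟨hε0, hε1⟩ t ht x
  have habs : (0:ℝ) < |t| := by rwa [abs_of_pos ht]
  set s := |t| ^ ((1:ℝ)/2) with hsdef
  have hs0 : 0 < s := Real.rpow_pos_of_pos habs _
  set T := |t| ^ (-δ/2) with hTdef
  have hT0 : 0 < T := Real.rpow_pos_of_pos habs _
  set A := s + ‖x‖ with hAdef
  have hsA : s ≤ A := le_add_of_nonneg_right (norm_nonneg x)
  have hA0 : 0 < A := lt_of_lt_of_le hs0 hsA
  have hAp0 : 0 < A ^ p := Real.rpow_pos_of_pos hA0 _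
  have hkey : ∀ q : ℝ, s ^ q = |t| ^ ((1:ℝ)/2 * q) := fun q => by
    rw [hsdef, ← Real.rpow_mul (abs_nonneg t)]
  have hsplit : s ^ ζ = T * s ^ p := by
    rw [hkey, hkey, hTdef, ← Real.rpow_add habs]
    congr 1
    rw [hpdef]; ring
  have hsd : s ^ (-δ) = T := by
    rw [hkey, hTdef]
    congr 1
    ring
  -- support of the mollifier
  have hsupp : ∀ y : E3, ε < ‖y‖ → ρ (ε⁻¹ • y) = 0 := by
    intro y hy
    apply hρsupp
    rw [norm_smul, norm_inv, Real.norm_eq_abs, abs_of_pos hε0]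
    have h1 : ε⁻¹ * ε < ε⁻¹ * ‖y‖ := by
      exact mul_lt_mul_of_pos_left hy (inv_pos.2 hε0)
    rwa [inv_mul_cancel₀ hε0.ne'] at h1
  -- the per-case plan: find B with the kernel bound and κ * B ≤ D (cases 0,a,b)
  have main : ∀ B : ℝ, 0 ≤ B → κ * B ≤ D →
      (∀ y ∈ Metric.closedBall (0:E3) ε, |K (t, x - y)| ≤ C * (B * (T * A ^ p))) →
      |∫ y : E3, K (t, x - y) * (ε ^ (-3 : ℝ) * ρ (ε⁻¹ • y))|
        ≤ C * M * D * T * A ^ p := by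
    intro B hB0 hBD hKb
    have h := conv_bound ε hε0 (fun y => K (t, x - y)) (fun y => ρ (ε⁻¹ • y)) M
      (C * (B * (T * A ^ p))) (fun y => hM _) hsupp (by positivity) hKb
    rw [← hκdef] at h
    refine h.trans ?_
    calc C * (B * (T * A ^ p)) * M * κ = (C * M * (κ * B)) * (T * A ^ p) := by ring
      _ ≤ (C * M * D) * (T * A ^ p) := by
          refine mul_le_mul_of_nonneg_right ?_ (by positivity)
          exact mul_le_mul_of_nonneg_left hBD (by positivity)
      _ = C * M * D * T * A ^ p := by ring
  rcases le_or_gt 0 p with hp | hp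
  · -- easy case : 0 ≤ ζ + δ
    refine main 1 zero_le_one hD1 ?_
    intro y hy
    refine (hK t (x - y)).trans ?_
    rw [one_mul]
    refine mul_le_mul_of_nonneg_left ?_ hC
    calc (|t| ^ ((1:ℝ)/2) + ‖x - y‖) ^ ζ ≤ s ^ ζ := by
          refine Real.rpow_le_rpow_of_nonpos hs0 ?_ hζ0.le
          exact le_add_of_nonneg_right (norm_nonneg _)
      _ = T * s ^ p := hsplit
      _ ≤ T * A ^ p := by
          refine mul_le_mul_of_nonneg_left ?_ hT0.le
          exact Real.rpow_le_rpow hs0.le hsA hp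
  · rcases le_or_gt (2 * ε) ‖x‖ with hcase | hcase
    · -- case a : far field
      refine main ((2:ℝ) ^ (-ζ)) hD2 hDa ?_
      intro y hy
      rw [mem_closedBall_zero_iff] at hy
      refine (hK t (x - y)).trans (mul_le_mul_of_nonneg_left ?_ hC)
      have hxy : A / 2 ≤ s + ‖x - y‖ := by
        have h1 : ‖x‖ - ‖y‖ ≤ ‖x - y‖ := norm_sub_norm_le x y
        rw [hAdef]
        linarith
      calc (|t| ^ ((1:ℝ)/2) + ‖x - y‖) ^ ζ ≤ (A / 2) ^ ζ :=
            Real.rpow_le_rpow_of_nonpos (by positivity) hxy hζ0.le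
        _ = A ^ ζ * (2:ℝ) ^ (-ζ) := by
            rw [Real.div_rpow hA0.le (by norm_num), Real.rpow_neg (by norm_num), div_eq_mul_inv]
        _ = (2:ℝ) ^ (-ζ) * (A ^ p * A ^ (-δ)) := by
            rw [show ζ = p + -δ by rw [hpdef]; ring, Real.rpow_add hA0]
            ring
        _ ≤ (2:ℝ) ^ (-ζ) * (A ^ p * T) := by
            refine mul_le_mul_of_nonneg_left (mul_le_mul_of_nonneg_left ?_ hAp0.le) hD2
            rw [← hsd]
            exact Real.rpow_le_rpow_of_nonpos hs0 hsA (by linarith)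
        _ = (2:ℝ) ^ (-ζ) * (T * A ^ p) := by ring
    · rcases le_or_gt ε s with hcase2 | hcase2
      · -- case b : near field, large time
        refine main ((3:ℝ) ^ (-p)) hD3 hDb ?_
        intro y hy
        refine (hK t (x - y)).trans (mul_le_mul_of_nonneg_left ?_ hC)
        have hA3s : A ≤ 3 * s := by
          rw [hAdef]; linarith
        have h3s : (3 * s) ^ p ≤ A ^ p :=
          Real.rpow_le_rpow_of_nonpos hA0 hA3s hp.le
        have h3s' : (3 * s) ^ p = (3:ℝ) ^ p * s ^ p := Real.mul_rpow (by norm_num) hs0.le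
        have h33 : (3:ℝ) ^ (-p) * (3:ℝ) ^ p = 1 := by
          rw [← Real.rpow_add (by norm_num : (0:ℝ) < 3)]
          norm_num
        calc (|t| ^ ((1:ℝ)/2) + ‖x - y‖) ^ ζ ≤ s ^ ζ := by
              refine Real.rpow_le_rpow_of_nonpos hs0 ?_ hζ0.le
              exact le_add_of_nonneg_right (norm_nonneg _)
          _ = T * s ^ p := hsplit
          _ = T * ((3:ℝ) ^ (-p) * ((3 * s) ^ p)) := by
              rw [h3s']
              rw [← mul_assoc ((3:ℝ) ^ (-p)), h33, one_mul]
          _ ≤ T * ((3:ℝ) ^ (-p) * A ^ p) := by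
              refine mul_le_mul_of_nonneg_left (mul_le_mul_of_nonneg_left h3s hD3) hT0.le
          _ = (3:ℝ) ^ (-p) * (T * A ^ p) := by ring
      · -- case c : near field, small time (singular case)
        -- pointwise kernel bound
        have hker : ∀ y : E3, |K (t, x - y)| ≤ C * (T * (s + ‖x - y‖) ^ p) := by
          intro y
          refine (hK t (x - y)).trans (mul_le_mul_of_nonneg_left ?_ hC)
          have hb0 : (0:ℝ) < s + ‖x - y‖ := by positivity
          calc (|t| ^ ((1:ℝ)/2) + ‖x - y‖) ^ ζ
              = (s + ‖x - y‖) ^ p * (s + ‖x - y‖) ^ (-δ) := by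
                rw [show ζ = p + -δ by rw [hpdef]; ring, Real.rpow_add hb0]
            _ ≤ (s + ‖x - y‖) ^ p * s ^ (-δ) := by
                refine mul_le_mul_of_nonneg_left ?_ (Real.rpow_nonneg hb0.le _)
                exact Real.rpow_le_rpow_of_nonpos hs0
                  (le_add_of_nonneg_right (norm_nonneg _)) (by linarith)
            _ = T * (s + ‖x - y‖) ^ p := by rw [hsd]; ring
        have hεp : (0:ℝ) ≤ ε ^ (-3:ℝ) := Real.rpow_nonneg hε0.le _
        -- the majorant
        set c₁ := C * (ε ^ (-3:ℝ) * M) * T with hc₁def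
        have hc₁0 : 0 ≤ c₁ := by positivity
        set g : E3 → ℝ := Set.indicator (Metric.closedBall (0:E3) ε)
          (fun y => c₁ * (s + ‖x - y‖) ^ p) with hgdef
        have hcont : Continuous fun y : E3 => c₁ * (s + ‖x - y‖) ^ p := by
          refine continuous_const.mul ?_
          refine Continuous.rpow_const ?_ fun y => Or.inl (by positivity)
          exact continuous_const.add (continuous_const.sub continuous_id).norm
        have hgint : Integrable g := by
          refine (hcont.continuousOn.integrableOn_compact (isCompact_closedBall _ _)
            ).integrable_indicator measurableSet_closedBall
        have step1 : |∫ y : E3, K (t, x - y) * (ε ^ (-3 : ℝ) * ρ (ε⁻¹ • y))|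
            ≤ ∫ y : E3, |K (t, x - y) * (ε ^ (-3 : ℝ) * ρ (ε⁻¹ • y))| := by
          have h := norm_integral_le_integral_norm (μ := volume)
            (fun y : E3 => K (t, x - y) * (ε ^ (-3:ℝ) * ρ (ε⁻¹ • y)))
          simpa only [Real.norm_eq_abs] using h
        have step2 : ∫ y : E3, |K (t, x - y) * (ε ^ (-3 : ℝ) * ρ (ε⁻¹ • y))|
            ≤ ∫ y : E3, g y := by
          refine integral_mono_of_nonneg (Filter.Eventually.of_forall fun y => abs_nonneg _)
            hgint (Filter.Eventually.of_forall fun y => ?_)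
          by_cases hy : y ∈ Metric.closedBall (0:E3) ε
          · rw [hgdef, Set.indicator_of_mem hy]
            show |K (t, x - y) * (ε ^ (-3:ℝ) * ρ (ε⁻¹ • y))| ≤ c₁ * (s + ‖x - y‖) ^ p
            rw [abs_mul, abs_mul, abs_of_nonneg hεp]
            calc |K (t, x - y)| * (ε ^ (-3:ℝ) * |ρ (ε⁻¹ • y)|)
                ≤ (C * (T * (s + ‖x - y‖) ^ p)) * (ε ^ (-3:ℝ) * M) := by
                  refine mul_le_mul (hker y) (mul_le_mul_of_nonneg_left (hM _) hεp)
                    (by positivity) (by positivity)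
              _ = c₁ * (s + ‖x - y‖) ^ p := by rw [hc₁def]; ring
          · rw [hgdef, Set.indicator_of_notMem hy]
            show |K (t, x - y) * (ε ^ (-3:ℝ) * ρ (ε⁻¹ • y))| ≤ 0
            rw [mem_closedBall_zero_iff, not_le] at hy
            simp [hsupp y hy]
        -- compute/bound the integral of the majorant
        have step3 : ∫ y : E3, g y
            = c₁ * ∫ y in Metric.closedBall (0:E3) ε, (s + ‖x - y‖) ^ p := by
          rw [hgdef, integral_indicator measurableSet_closedBall, integral_const_mul]
        -- translation invariance
        set G : E3 → ℝ := Set.indicator (Metric.closedBall x ε) (fun u => (s + ‖u‖) ^ p)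
          with hGdef
        have step4 : ∫ y in Metric.closedBall (0:E3) ε, (s + ‖x - y‖) ^ p
            = ∫ u : E3, G u := by
          rw [← integral_sub_left_eq_self G volume x,
            ← integral_indicator measurableSet_closedBall]
          congr 1
          funext y
          rw [hGdef]
          simp only [Set.indicator, Metric.mem_closedBall, dist_eq_norm, sub_sub_cancel_left,
            norm_neg, sub_zero]
        have hsub : Metric.closedBall x ε ⊆ Metric.closedBall (0:E3) (3 * ε) := by
          refine Metric.closedBall_subset_closedBall' ?_
          rw [dist_zero_right]
          linarith
        have hmajint : Integrable
            (Set.indicator (Metric.closedBall (0:E3) (3*ε)) (fun u : E3 => (s + ‖u‖) ^ p)) := by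
          have hcont2 : Continuous fun u : E3 => (s + ‖u‖) ^ p := by
            refine Continuous.rpow_const ?_ fun u => Or.inl (by positivity)
            exact continuous_const.add continuous_norm
          exact (hcont2.continuousOn.integrableOn_compact (isCompact_closedBall _ _)
            ).integrable_indicator measurableSet_closedBall
        have step5 : ∫ u : E3, G u
            ≤ ∫ u in Metric.closedBall (0:E3) (3*ε), (s + ‖u‖) ^ p := by
          rw [← integral_indicator measurableSet_closedBall]
          refine integral_mono_of_nonneg ?_ hmajint ?_
          · exact Filter.Eventually.of_forall fun u =>
              Set.indicator_nonneg (fun u _ => Real.rpow_nonneg (by positivity) _) u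
          · exact Filter.Eventually.of_forall fun u =>
              Set.indicator_le_indicator_of_subset hsub
                (fun u => Real.rpow_nonneg (by positivity) _) u
        have step6 := polar_bound p s (3*ε) hζδ hs0 (by positivity) (by linarith)
        rw [← hκdef] at step6
        -- put everything together
        have hA3ε : A ≤ 3 * ε := by rw [hAdef]; linarith
        have hεA : ε ^ p ≤ (3:ℝ) ^ (-p) * A ^ p := by
          have h1 : (3 * ε) ^ p ≤ A ^ p := Real.rpow_le_rpow_of_nonpos hA0 hA3ε hp.le
          have h2 : (3 * ε) ^ p = (3:ℝ) ^ p * ε ^ p := Real.mul_rpow (by norm_num) hε0.le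
          have h33 : (3:ℝ) ^ (-p) * (3:ℝ) ^ p = 1 := by
            rw [← Real.rpow_add (by norm_num : (0:ℝ) < 3)]
            norm_num
          calc ε ^ p = (3:ℝ) ^ (-p) * ((3:ℝ) ^ p * ε ^ p) := by
                rw [← mul_assoc, h33, one_mul]
            _ = (3:ℝ) ^ (-p) * (3 * ε) ^ p := by rw [h2]
            _ ≤ (3:ℝ) ^ (-p) * A ^ p := mul_le_mul_of_nonneg_left h1 hD3
        have h6ε : (2 * (3 * ε)) ^ (3 + p) = (6:ℝ) ^ (3 + p) * (ε ^ (3:ℕ) * ε ^ p) := by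
          rw [show (2:ℝ) * (3 * ε) = 6 * ε by ring, Real.mul_rpow (by norm_num) hε0.le,
            Real.rpow_add hε0, ← Real.rpow_natCast ε 3]
          norm_num
        have hpow : (ε:ℝ) ^ (3:ℕ) * ε ^ (-3:ℝ) = 1 := by
          rw [← Real.rpow_natCast ε 3, ← Real.rpow_add hε0]
          norm_num
        have hεp3 : (0:ℝ) ≤ ε ^ p := Real.rpow_nonneg hε0.le _
        calc |∫ y : E3, K (t, x - y) * (ε ^ (-3 : ℝ) * ρ (ε⁻¹ • y))|
            ≤ ∫ y : E3, g y := step1.trans step2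
          _ = c₁ * ∫ y in Metric.closedBall (0:E3) ε, (s + ‖x - y‖) ^ p := step3
          _ = c₁ * ∫ u : E3, G u := by rw [step4]
          _ ≤ c₁ * ∫ u in Metric.closedBall (0:E3) (3*ε), (s + ‖u‖) ^ p :=
              mul_le_mul_of_nonneg_left step5 hc₁0
          _ ≤ c₁ * (3 * κ * ((2 * (3 * ε)) ^ (3 + p) / (3 + p))) :=
              mul_le_mul_of_nonneg_left step6 hc₁0
          _ = (C * M * (3 * κ * ((6:ℝ) ^ (3 + p) / (3 + p)))) * T
                * (ε ^ (3:ℕ) * ε ^ (-3:ℝ)) * ε ^ p := by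
              rw [h6ε, hc₁def]; ring
          _ = (C * M * (3 * κ * ((6:ℝ) ^ (3 + p) / (3 + p)))) * T * ε ^ p := by
              rw [hpow, mul_one]
          _ ≤ (C * M * (3 * κ * ((6:ℝ) ^ (3 + p) / (3 + p)))) * T
                * ((3:ℝ) ^ (-p) * A ^ p) := by
              refine mul_le_mul_of_nonneg_left hεA (by positivity)
          _ = (C * M * (3 * κ * ((6:ℝ) ^ (3 + p) / (3 + p)) * (3:ℝ) ^ (-p))) * T * A ^ p := by
              ring
          _ ≤ C * M * D * T * A ^ p := by
              refine mul_le_mul_of_nonneg_right (mul_le_mul_of_nonneg_right ?_ hT0.le)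
                hAp0.le
              refine mul_le_mul_of_nonneg_left ?_ (by positivity)
              calc 3 * κ * ((6:ℝ) ^ (3 + p) / (3 + p)) * (3:ℝ) ^ (-p) ≤ D := hDcle
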